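/- arXiv:2501.03849 — 2 statements merged into one kernel-verified Lean document; each statement's English description precedes it below -/
import Mathlib

section
/- Let A be a self-adjoint operator on a Hilbert space H, U(s) = e^{isA} the associated one-parameter unitary group, and Φ ∈ H a vector with ‖|A|^{1/2}Φ‖ < ∞ (so that ⟨Φ, AΦ⟩ is finite). Then lim_{s→0} Im⟨Φ, U(s)Φ⟩ / s = ⟨Φ, AΦ⟩ and ‖U(s)Φ - Φ‖² = o(s) as s → 0. -/
open Filter Topology MeasureTheory Complex

local notation "⟪" x ", " y "⟫" => @inner ℂ _ _ x y

lemma aux_abs_one_sub_cos_le (t : ℝ) : |1 - Real.cos t| ≤ |t| := by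
  have h1 : Real.cos t = 1 - 2 * Real.sin (t / 2) ^ 2 := by
    have h2 := Real.sin_sq_add_cos_sq (t / 2)
    have h3 : Real.cos (2 * (t / 2)) = 2 * Real.cos (t / 2) ^ 2 - 1 := Real.cos_two_mul _
    rw [show 2 * (t / 2) = t by ring] at h3
    linarith
  have hs1 : |Real.sin (t / 2)| ≤ 1 := Real.abs_sin_le_one _
  have hs2 : |Real.sin (t / 2)| ≤ |t / 2| := Real.abs_sin_le_abs
  have hnn : 0 ≤ 1 - Real.cos t := by nlinarith [Real.cos_le_one t]
  rw [_root_.abs_of_nonneg hnn, h1]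
  have : Real.sin (t / 2) ^ 2 = |Real.sin (t / 2)| * |Real.sin (t / 2)| := by
    rw [← abs_mul, ← sq, abs_sq]
  rw [abs_div, _root_.abs_two] at hs2
  have hm : |Real.sin (t / 2)| * |Real.sin (t / 2)| ≤ (|t| / 2) * 1 :=
    mul_le_mul hs2 hs1 (abs_nonneg _) (by positivity)
  rw [this]
  linarith

/-- Let `A` be a self-adjoint operator on a Hilbert space `H`, with
`U s = e^{isA}` the associated one-parameter unitary group, and `Φ` a unit vector such that
`⟪Φ, A Φ⟫` is finite.  The operator `A` is encoded through the spectral probability measure `μ`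
of `A` at `Φ`, so that `⟪Φ, U s Φ⟫ = ∫ e^{iλs} dμ(λ)`; finiteness of `⟪Φ, A Φ⟫` means
`∫ |λ| dμ(λ) < ∞` and then `⟪Φ, A Φ⟫ = ∫ λ dμ(λ)`.  The conclusion is
`lim_{s→0} Im ⟪Φ, U s Φ⟫ / s = ⟪Φ, A Φ⟫` and `‖U s Φ - Φ‖² = o(s)`. -/
theorem bekenstein_stmt3 {H : Type*} [NormedAddCommGroup H] [InnerProductSpace ℂ H]
    [CompleteSpace H] (U : ℝ → H →L[ℂ] H)
    (hU : ∀ s, U s ∈ unitary (H →L[ℂ] H))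
    (Φ : H) (hΦ : ‖Φ‖ = 1) (μ : Measure ℝ) [IsProbabilityMeasure μ]
    (hspec : ∀ s : ℝ, ⟪Φ, U s Φ⟫ = ∫ x, Complex.exp (Complex.I * x * s) ∂μ)
    (hint : Integrable (fun x : ℝ => |x|) μ) :
    Tendsto (fun s : ℝ => (⟪Φ, U s Φ⟫).im / s) (𝓝[≠] 0) (𝓝 (∫ x, x ∂μ)) ∧
      Tendsto (fun s : ℝ => ‖U s Φ - Φ‖ ^ 2 / s) (𝓝[≠] 0) (𝓝 0) := by
  -- Integrability of the exponential
  have hexp_int : ∀ s : ℝ, Integrable (fun x : ℝ => Complex.exp (Complex.I * x * s)) μ := by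
    intro s
    apply (integrable_const (1 : ℝ)).mono'
    · exact (Complex.continuous_exp.comp (by continuity)).aestronglyMeasurable
    · filter_upwards with x
      rw [Complex.norm_exp]
      simp [mul_comm, mul_assoc]
  -- im and re of the inner product
  have him : ∀ s : ℝ, (⟪Φ, U s Φ⟫).im = ∫ x, Real.sin (x * s) ∂μ := by
    intro s
    rw [hspec s, ← RCLike.im_to_complex, ← integral_im (hexp_int s)]
    congr 1; funext x
    rw [show Complex.I * x * s = ((x * s : ℝ) : ℂ) * Complex.I by push_cast; ring,
      Complex.exp_mul_I]
    simp [← Complex.ofReal_mul, Complex.sin_ofReal_re, Complex.cos_ofReal_re]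
  have hre : ∀ s : ℝ, (⟪Φ, U s Φ⟫).re = ∫ x, Real.cos (x * s) ∂μ := by
    intro s
    rw [hspec s, ← RCLike.re_to_complex, ← integral_re (hexp_int s)]
    congr 1; funext x
    rw [show Complex.I * x * s = ((x * s : ℝ) : ℂ) * Complex.I by push_cast; ring,
      Complex.exp_mul_I]
    simp [← Complex.ofReal_mul, Complex.sin_ofReal_re, Complex.cos_ofReal_re]
  have hcos_int : ∀ s : ℝ, Integrable (fun x : ℝ => Real.cos (x * s)) μ := by
    intro s
    apply (integrable_const (1 : ℝ)).mono'
    · exact (Real.continuous_cos.comp (by continuity)).aestronglyMeasurable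
    · filter_upwards with x using by simpa using Real.abs_cos_le_one (x * s)
  constructor
  · -- first limit
    have key : Tendsto (fun s : ℝ => ∫ x, Real.sin (x * s) / s ∂μ) (𝓝[≠] 0)
        (𝓝 (∫ x, x ∂μ)) := by
      apply tendsto_integral_filter_of_dominated_convergence (fun x => |x|)
      · filter_upwards with s
        exact ((Real.continuous_sin.comp (continuous_id.mul continuous_const)).div_const
          s).aestronglyMeasurable
      · filter_upwards [self_mem_nhdsWithin] with s (hs : s ≠ 0)
        filter_upwards with x
        rw [Real.norm_eq_abs, abs_div]
        rw [div_le_iff₀ (abs_pos.mpr hs)]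
        calc |Real.sin (x * s)| ≤ |x * s| := Real.abs_sin_le_abs
          _ = |x| * |s| := abs_mul _ _
      · exact hint
      · filter_upwards with x
        have hd : HasDerivAt (fun s : ℝ => Real.sin (x * s)) x 0 := by
          have := (Real.hasDerivAt_sin (x * 0)).comp 0
            ((hasDerivAt_id 0).const_mul x)
          simpa [Function.comp_def] using this
        have := hd.hasDerivWithinAt (s := ({(0:ℝ)}ᶜ : Set ℝ))
        rw [hasDerivWithinAt_iff_tendsto_slope] at this
        have h0 : (({(0:ℝ)}ᶜ : Set ℝ) \ {(0:ℝ)}) = ({(0:ℝ)}ᶜ : Set ℝ) := by simp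
        rw [h0] at this
        refine this.congr (fun s => ?_)
        simp [slope_def_field, div_eq_inv_mul]
    refine key.congr (fun s => ?_)
    rw [him s, ← integral_div]
  · -- second limit
    have hnorm : ∀ s : ℝ, ‖U s Φ - Φ‖ ^ 2 = ∫ x, 2 - 2 * Real.cos (x * s) ∂μ := by
      intro s
      have h1 : ‖U s Φ‖ = 1 := by
        rw [(U s).norm_map_of_mem_unitary (hU s), hΦ]
      have := @norm_sub_sq ℂ _ _ _ _ (U s Φ) Φ
      rw [this, h1, hΦ]
      have h2 : RCLike.re (⟪U s Φ, Φ⟫ : ℂ) = ∫ x, Real.cos (x * s) ∂μ := by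
        rw [inner_re_symm, RCLike.re_to_complex, hre s]
      rw [h2, integral_sub (integrable_const 2) ((hcos_int s).const_mul 2),
        integral_const_mul]
      simp
      ring
    have key : Tendsto (fun s : ℝ => ∫ x, (2 - 2 * Real.cos (x * s)) / s ∂μ) (𝓝[≠] 0)
        (𝓝 (∫ (_ : ℝ), (0:ℝ) ∂μ)) := by
      apply tendsto_integral_filter_of_dominated_convergence (fun x => 2 * |x|)
      · filter_upwards with s
        exact (((continuous_const.sub (continuous_const.mul (Real.continuous_cos.comp
          (continuous_id.mul continuous_const))))).div_const
          s).aestronglyMeasurable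
      · filter_upwards [self_mem_nhdsWithin] with s (hs : s ≠ 0)
        filter_upwards with x
        rw [Real.norm_eq_abs, abs_div, div_le_iff₀ (abs_pos.mpr hs)]
        have he : 2 - 2 * Real.cos (x * s) = 2 * (1 - Real.cos (x * s)) := by ring
        rw [he, abs_mul, _root_.abs_two]
        have h3 := aux_abs_one_sub_cos_le (x * s)
        rw [abs_mul] at h3
        nlinarith [abs_nonneg s, abs_nonneg x]
      · exact hint.const_mul 2
      · filter_upwards with x
        have hd : HasDerivAt (fun s : ℝ => 2 - 2 * Real.cos (x * s)) 0 0 := by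
          have h1 := (Real.hasDerivAt_cos (x * 0)).comp 0 ((hasDerivAt_id 0).const_mul x)
          have h2 := ((h1.const_mul 2).const_sub 2)
          simpa using h2
        have := hd.hasDerivWithinAt (s := ({(0:ℝ)}ᶜ : Set ℝ))
        rw [hasDerivWithinAt_iff_tendsto_slope] at this
        have h0 : (({(0:ℝ)}ᶜ : Set ℝ) \ {(0:ℝ)}) = ({(0:ℝ)}ᶜ : Set ℝ) := by simp
        rw [h0] at this
        refine this.congr (fun s => ?_)
        simp [slope_def_field, div_eq_inv_mul]
    rw [MeasureTheory.integral_zero] at key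
    refine key.congr (fun s => ?_)
    rw [hnorm s, ← integral_div]
end

section
/- Let M be a von Neumann algebra on H with cyclic and separating vectors Ω, Φ, and let S_{Ω,Φ}: xΦ ↦ x*Ω (x ∈ M) and S'_{Ω,Φ}: x'Φ ↦ x'*Ω (x' ∈ M') be the relative Tomita operators (closures). Then the adjoint of S_{Ω,Φ} equals S'_{Ω,Φ}. -/
open scoped ComplexConjugate

local notation "⟪" x ", " y "⟫" => @inner ℂ _ _ x y

/-- A (possibly unbounded) conjugate-linear operator on a complex Hilbert space `H`,
given by a domain and a function (whose values are only relevant on the domain). -/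
structure ConjLinearPMap (H : Type*) [NormedAddCommGroup H] [InnerProductSpace ℂ H] where
  domain : Set H
  toFun : H → H
  zero_mem : (0 : H) ∈ domain
  add_mem : ∀ {x y : H}, x ∈ domain → y ∈ domain → x + y ∈ domain
  smul_mem : ∀ (c : ℂ) {x : H}, x ∈ domain → c • x ∈ domain
  map_add : ∀ {x y : H}, x ∈ domain → y ∈ domain → toFun (x + y) = toFun x + toFun y
  map_smul : ∀ (c : ℂ) {x : H}, x ∈ domain → toFun (c • x) = conj c • toFun x

namespace ConjLinearPMap

variable {H : Type*} [NormedAddCommGroup H] [InnerProductSpace ℂ H]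

/-- The graph of a partially defined conjugate-linear operator. -/
def graph (S : ConjLinearPMap H) : Set (H × H) :=
  {p | p.1 ∈ S.domain ∧ p.2 = S.toFun p.1}

/-- `T` is the adjoint of the conjugate-linear operator `S`: the domain of `T` consists of all
`ξ` for which some `η` satisfies `⟪ξ, S ζ⟫ = ⟪ζ, η⟫` for all `ζ` in the domain of `S`, and
`T ξ` is such an `η`. -/
def IsAdjointOf (T S : ConjLinearPMap H) : Prop :=
  (∀ ξ : H, ξ ∈ T.domain ↔ ∃ η : H, ∀ ζ ∈ S.domain, ⟪ξ, S.toFun ζ⟫ = ⟪ζ, η⟫) ∧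
    ∀ ξ ∈ T.domain, ∀ ζ ∈ S.domain, ⟪ξ, S.toFun ζ⟫ = ⟪ζ, T.toFun ξ⟫

end ConjLinearPMap

set_option linter.unusedSectionVars false
set_option maxHeartbeats 1000000

namespace Bek7
open ContinuousLinearMap Filter
open scoped Topology
variable {H : Type*} [NormedAddCommGroup H] [InnerProductSpace ℂ H] [CompleteSpace H]
abbrev F2 (H : Type*) := WithLp 2 (H × H)

noncomputable def mk2 (a b : H) : F2 H := (WithLp.equiv 2 (H × H)).symm (a, b)

@[simp] lemma mk2_fst (a b : H) : (mk2 a b).fst = a := rfl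
@[simp] lemma mk2_snd (a b : H) : (mk2 a b).snd = b := rfl

lemma F2ext {f g : F2 H} (h1 : f.fst = g.fst) (h2 : f.snd = g.snd) : f = g := by
  apply (WithLp.equiv 2 (H × H)).injective
  exact Prod.ext h1 h2

lemma norm_sq_F2 (f : F2 H) : ‖f‖ ^ 2 = ‖f.fst‖ ^ 2 + ‖f.snd‖ ^ 2 :=
  WithLp.prod_norm_sq_eq_of_L2 f

lemma fst_le_norm (f : F2 H) : ‖f.fst‖ ≤ ‖f‖ := by
  have h := norm_sq_F2 f
  nlinarith [norm_nonneg f, norm_nonneg f.fst, norm_nonneg f.snd, sq_nonneg ‖f.snd‖]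

lemma snd_le_norm (f : F2 H) : ‖f.snd‖ ≤ ‖f‖ := by
  have h := norm_sq_F2 f
  nlinarith [norm_nonneg f, norm_nonneg f.fst, norm_nonneg f.snd, sq_nonneg ‖f.fst‖]

lemma norm_mk2_zero_left (b : H) : ‖(mk2 0 b : F2 H)‖ = ‖b‖ := by
  have h := norm_sq_F2 (mk2 0 b)
  simp only [mk2_fst, mk2_snd, norm_zero] at h
  nlinarith [norm_nonneg (mk2 0 b : F2 H), norm_nonneg b]

lemma norm_mk2_zero_right (a : H) : ‖(mk2 a 0 : F2 H)‖ = ‖a‖ := by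
  have h := norm_sq_F2 (mk2 a 0)
  simp only [mk2_fst, mk2_snd, norm_zero] at h
  nlinarith [norm_nonneg (mk2 a 0 : F2 H), norm_nonneg a]

lemma inner_F2 (x y : F2 H) :
    inner ℂ x y = ⟪x.fst, y.fst⟫ + ⟪x.snd, y.snd⟫ := WithLp.prod_inner_apply x y

variable (M : VonNeumannAlgebra H) (Φ Ω ξ η : H)

/-- The graph of the adjoint of `a Φ ↦ a ξ`, as a subspace of pairs. -/
def Cspace : Submodule ℂ (F2 H) where
  carrier := {p | ∀ a : H →L[ℂ] H, a ∈ M → ⟪p.fst, a ξ⟫ = ⟪p.snd, a Φ⟫}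
  add_mem' := by
    intro p q hp hq a ha
    simp only [WithLp.add_fst, WithLp.add_snd, inner_add_left, hp a ha, hq a ha]
  zero_mem' := by
    intro a ha
    simp
  smul_mem' := by
    intro c p hp a ha
    simp only [WithLp.smul_fst, WithLp.smul_snd, inner_smul_left, hp a ha]

/-- The graph of (the closure of) `a Φ ↦ μ • (a ξ)`. -/
def Gspace (μ : ℝ) : Submodule ℂ (F2 H) where
  carrier := {q | ∀ p ∈ Cspace M Φ ξ, (μ : ℂ) * ⟪q.fst, p.snd⟫ = ⟪q.snd, p.fst⟫}
  add_mem' := by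
    intro q r hq hr p hp
    simp only [WithLp.add_fst, WithLp.add_snd, inner_add_left]
    rw [mul_add, hq p hp, hr p hp]
  zero_mem' := by
    intro p hp
    simp
  smul_mem' := by
    intro c q hq p hp
    simp only [WithLp.smul_fst, WithLp.smul_snd, inner_smul_left]
    rw [← hq p hp]
    ring

lemma isClosed_G (μ : ℝ) : IsClosed ((Gspace M Φ ξ μ : Submodule ℂ (F2 H)) : Set (F2 H)) := by
  have hfst : Continuous fun q : F2 H => q.fst :=
    continuous_fst.comp (WithLp.prod_continuous_ofLp 2 H H)
  have hsnd : Continuous fun q : F2 H => q.snd :=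
    continuous_snd.comp (WithLp.prod_continuous_ofLp 2 H H)
  have : ((Gspace M Φ ξ μ : Submodule ℂ (F2 H)) : Set (F2 H)) =
      ⋂ p ∈ (Cspace M Φ ξ : Set (F2 H)),
        {q : F2 H | (μ : ℂ) * ⟪q.fst, p.snd⟫ - ⟪q.snd, p.fst⟫ = 0} := by
    ext q
    simp only [Set.mem_iInter, Set.mem_setOf_eq, sub_eq_zero, SetLike.mem_coe]
    rfl
  rw [this]
  refine isClosed_biInter fun p hp => isClosed_eq ?_ continuous_const
  exact ((continuous_const.mul (Continuous.inner hfst continuous_const)).sub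
    (Continuous.inner hsnd continuous_const))

noncomputable instance instHasOP (μ : ℝ) : Submodule.HasOrthogonalProjection (Gspace M Φ ξ μ) := by
  haveI : CompleteSpace (Gspace M Φ ξ μ) := (isClosed_G M Φ ξ μ).completeSpace_coe
  infer_instance

noncomputable def embed : H →L[ℂ] F2 H :=
  (((WithLp.prodContinuousLinearEquiv 2 ℂ H H).symm : (H × H) →L[ℂ] F2 H)).comp
    (ContinuousLinearMap.inl ℂ H H)

@[simp] lemma embed_fst (w : H) : (embed w : F2 H).fst = w := rfl
@[simp] lemma embed_snd (w : H) : (embed w : F2 H).snd = 0 := rfl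

lemma norm_embed (w : H) : ‖(embed w : F2 H)‖ = ‖w‖ := by
  have : (embed w : F2 H) = mk2 w 0 := F2ext rfl rfl
  rw [this, norm_mk2_zero_right]

/-- orthogonal projection onto `Gspace`, as a map to the big space. -/
noncomputable def PP (μ : ℝ) (f : F2 H) : F2 H :=
  (Submodule.orthogonalProjectionOnto (Gspace M Φ ξ μ) f : F2 H)

lemma PP_mem (μ : ℝ) (f : F2 H) : PP M Φ ξ μ f ∈ Gspace M Φ ξ μ := SetLike.coe_mem _

lemma sub_PP_orth (μ : ℝ) (f : F2 H) : f - PP M Φ ξ μ f ∈ (Gspace M Φ ξ μ)ᗮ :=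
  Submodule.sub_starProjection_mem_orthogonal f

lemma PP_norm_le (μ : ℝ) (f : F2 H) : ‖PP M Φ ξ μ f‖ ≤ ‖f‖ := by
  have h := Submodule.orthogonalProjectionOnto_norm_le (Gspace M Φ ξ μ)
  have h2 := (Submodule.orthogonalProjectionOnto (Gspace M Φ ξ μ)).le_opNorm f
  calc ‖PP M Φ ξ μ f‖ = ‖Submodule.orthogonalProjectionOnto (Gspace M Φ ξ μ) f‖ := rfl
    _ ≤ ‖Submodule.orthogonalProjectionOnto (Gspace M Φ ξ μ)‖ * ‖f‖ := h2
    _ ≤ 1 * ‖f‖ := by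
        apply mul_le_mul_of_nonneg_right h (norm_nonneg f)
    _ = ‖f‖ := one_mul _


/-! ### Generators -/

lemma gen_C (hA : ∀ x : H →L[ℂ] H, x ∈ M → ⟪ξ, (star x) Ω⟫ = ⟪x Φ, η⟫)
    (b : H →L[ℂ] H) (hb : b ∈ M) : mk2 (b Ω) (b η) ∈ Cspace M Φ ξ := by
  intro a ha
  simp only [mk2_fst, mk2_snd]
  have h1 : ⟪a ξ, b Ω⟫ = ⟪a Φ, b η⟫ := by
    have h2 := hA (star b * a) (mul_mem (star_mem hb) ha)
    rw [star_mul, star_star] at h2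
    calc ⟪a ξ, b Ω⟫ = ⟪ξ, adjoint a (b Ω)⟫ := (adjoint_inner_right a ξ (b Ω)).symm
      _ = ⟪ξ, (star a * b) Ω⟫ := rfl
      _ = ⟪(star b * a) Φ, η⟫ := h2
      _ = ⟪adjoint b (a Φ), η⟫ := rfl
      _ = ⟪a Φ, b η⟫ := adjoint_inner_left b η (a Φ)
  calc ⟪b Ω, a ξ⟫ = conj ⟪a ξ, b Ω⟫ := (inner_conj_symm _ _).symm
    _ = conj ⟪a Φ, b η⟫ := by rw [h1]
    _ = ⟪b η, a Φ⟫ := inner_conj_symm _ _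

lemma gen_G (μ : ℝ) (a : H →L[ℂ] H) (ha : a ∈ M) :
    mk2 (a Φ) ((μ : ℂ) • (a ξ)) ∈ Gspace M Φ ξ μ := by
  intro p hp
  simp only [mk2_fst, mk2_snd, inner_smul_left, Complex.conj_ofReal]
  have h1 : ⟪a ξ, p.fst⟫ = ⟪a Φ, p.snd⟫ := by
    calc ⟪a ξ, p.fst⟫ = conj ⟪p.fst, a ξ⟫ := (inner_conj_symm _ _).symm
      _ = conj ⟪p.snd, a Φ⟫ := by rw [hp a ha]
      _ = ⟪a Φ, p.snd⟫ := inner_conj_symm _ _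
  rw [h1]

/-! ### Invariance under the algebra action -/

lemma C_inv (y : H →L[ℂ] H) (hy : y ∈ M) {p : F2 H} (hp : p ∈ Cspace M Φ ξ) :
    mk2 (adjoint y p.fst) (adjoint y p.snd) ∈ Cspace M Φ ξ := by
  intro a ha
  simp only [mk2_fst, mk2_snd]
  calc ⟪adjoint y p.fst, a ξ⟫ = ⟪p.fst, y (a ξ)⟫ := adjoint_inner_left y (a ξ) p.fst
    _ = ⟪p.fst, (y * a) ξ⟫ := rfl
    _ = ⟪p.snd, (y * a) Φ⟫ := hp _ (mul_mem hy ha)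
    _ = ⟪p.snd, y (a Φ)⟫ := rfl
    _ = ⟪adjoint y p.snd, a Φ⟫ := (adjoint_inner_left y (a Φ) p.snd).symm

lemma G_inv {μ : ℝ} (y : H →L[ℂ] H) (hy : y ∈ M) {q : F2 H} (hq : q ∈ Gspace M Φ ξ μ) :
    mk2 (y q.fst) (y q.snd) ∈ Gspace M Φ ξ μ := by
  intro p hp
  have h := hq _ (C_inv M Φ ξ y hy hp)
  simp only [mk2_fst, mk2_snd] at h ⊢
  rw [← adjoint_inner_right y q.fst p.snd, ← adjoint_inner_right y q.snd p.fst]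
  exact h

lemma Gperp_inv {μ : ℝ} (y : H →L[ℂ] H) (hy : y ∈ M) {r : F2 H}
    (hr : r ∈ (Gspace M Φ ξ μ)ᗮ) : mk2 (y r.fst) (y r.snd) ∈ (Gspace M Φ ξ μ)ᗮ := by
  rw [Submodule.mem_orthogonal] at hr ⊢
  intro u hu
  have hu' : mk2 (adjoint y u.fst) (adjoint y u.snd) ∈ Gspace M Φ ξ μ :=
    G_inv M Φ ξ (adjoint y) (star_mem hy) hu
  have h0 := hr _ hu'
  rw [inner_F2] at h0 ⊢
  simp only [mk2_fst, mk2_snd] at h0 ⊢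
  rw [adjoint_inner_left y r.fst u.fst, adjoint_inner_left y r.snd u.snd] at h0
  exact h0

lemma proj_comm {μ : ℝ} (y : H →L[ℂ] H) (hy : y ∈ M) (f : F2 H) :
    PP M Φ ξ μ (mk2 (y f.fst) (y f.snd)) = mk2 (y (PP M Φ ξ μ f).fst) (y (PP M Φ ξ μ f).snd) := by
  apply Submodule.eq_starProjection_of_mem_orthogonal
  · exact G_inv M Φ ξ y hy (PP_mem M Φ ξ μ f)
  · have heq : mk2 (y f.fst) (y f.snd) - mk2 (y (PP M Φ ξ μ f).fst) (y (PP M Φ ξ μ f).snd)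
        = mk2 (y (f - PP M Φ ξ μ f).fst) (y (f - PP M Φ ξ μ f).snd) := by
      apply F2ext <;>
        simp [WithLp.sub_fst, WithLp.sub_snd, map_sub]
    rw [heq]
    exact Gperp_inv M Φ ξ y hy (sub_PP_orth M Φ ξ μ f)

/-! ### The regularized commutant elements -/

noncomputable def fstL : F2 H →L[ℂ] H :=
  (ContinuousLinearMap.fst ℂ H H).comp
    ((WithLp.prodContinuousLinearEquiv 2 ℂ H H : F2 H ≃L[ℂ] H × H) : F2 H →L[ℂ] H × H)

noncomputable def sndL : F2 H →L[ℂ] H :=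
  (ContinuousLinearMap.snd ℂ H H).comp
    ((WithLp.prodContinuousLinearEquiv 2 ℂ H H : F2 H ≃L[ℂ] H × H) : F2 H →L[ℂ] H × H)

@[simp] lemma fstL_apply (f : F2 H) : fstL f = f.fst := rfl
@[simp] lemma sndL_apply (f : F2 H) : sndL f = f.snd := rfl

noncomputable def rCLM (μ : ℝ) : H →L[ℂ] H :=
  (fstL.comp (((Gspace M Φ ξ μ).subtypeL).comp (Submodule.orthogonalProjectionOnto (Gspace M Φ ξ μ)))).comp embed

noncomputable def sCLM (μ : ℝ) : H →L[ℂ] H :=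
  ((μ : ℂ))⁻¹ •
    ((sndL.comp (((Gspace M Φ ξ μ).subtypeL).comp
      (Submodule.orthogonalProjectionOnto (Gspace M Φ ξ μ)))).comp embed)

lemma rCLM_apply (μ : ℝ) (w : H) : rCLM M Φ ξ μ w = (PP M Φ ξ μ (embed w)).fst := rfl

lemma sCLM_apply (μ : ℝ) (w : H) :
    sCLM M Φ ξ μ w = ((μ : ℂ))⁻¹ • (PP M Φ ξ μ (embed w)).snd := rfl

lemma rCLM_le (μ : ℝ) (w : H) : ‖rCLM M Φ ξ μ w‖ ≤ ‖w‖ := by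
  rw [rCLM_apply]
  calc ‖(PP M Φ ξ μ (embed w)).fst‖ ≤ ‖PP M Φ ξ μ (embed w)‖ := fst_le_norm _
    _ ≤ ‖(embed w : F2 H)‖ := PP_norm_le M Φ ξ μ _
    _ = ‖w‖ := norm_embed w

lemma sCLM_mem_commutant (μ : ℝ) : sCLM M Φ ξ μ ∈ M.commutant := by
  rw [VonNeumannAlgebra.mem_commutant_iff]
  intro g hg
  ext w
  simp only [ContinuousLinearMap.mul_apply, sCLM_apply]
  have he : (embed (g w) : F2 H) = mk2 (g (embed w : F2 H).fst) (g (embed w : F2 H).snd) := by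
    apply F2ext <;> simp
  rw [he, proj_comm M Φ ξ g hg (embed w)]
  simp only [mk2_snd, map_smul]

/-! ### The basic approximation estimate -/

lemma approx {μ : ℝ} {q : F2 H} (hq : q ∈ Gspace M Φ ξ μ) :
    ‖q - PP M Φ ξ μ (embed q.fst)‖ ≤ ‖q.snd‖ := by
  set f : F2 H := embed q.fst with hf
  set d : F2 H := q - PP M Φ ξ μ f with hd
  have hdG : d ∈ Gspace M Φ ξ μ := Submodule.sub_mem _ hq (PP_mem M Φ ξ μ f)
  have hsplit : d = (q - f) + (f - PP M Φ ξ μ f) := by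
    rw [hd]; abel
  have horth : ⟪f - PP M Φ ξ μ f, d⟫ = 0 :=
    (Submodule.mem_orthogonal' _ _).mp (sub_PP_orth M Φ ξ μ f) d hdG
  have hqf : q - f = mk2 0 q.snd := by
    apply F2ext
    · simp [hf, WithLp.sub_fst]
    · simp [hf, WithLp.sub_snd]
  have hip : (‖d‖ : ℝ) ^ 2 = RCLike.re ⟪q - f, d⟫ := by
    have h1 : inner ℂ d d = ⟪q - f, d⟫ := by
      nth_rewrite 1 [hsplit]
      rw [inner_add_left, horth, add_zero]
    have h2 : RCLike.re (inner ℂ d d) = ‖d‖ ^ 2 := inner_self_eq_norm_sq (𝕜 := ℂ) d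
    rw [← h2, h1]
  have hbound : RCLike.re ⟪q - f, d⟫ ≤ ‖q.snd‖ * ‖d‖ := by
    calc RCLike.re ⟪q - f, d⟫ ≤ ‖⟪q - f, d⟫‖ := RCLike.re_le_norm _
      _ ≤ ‖q - f‖ * ‖d‖ := norm_inner_le_norm _ _
      _ = ‖q.snd‖ * ‖d‖ := by rw [hqf, norm_mk2_zero_left]
  have hnn : (0 : ℝ) ≤ ‖d‖ := norm_nonneg d
  nlinarith [hip, hbound, norm_nonneg q.snd]


/-! ### Convergence -/

noncomputable def μseq (n : ℕ) : ℝ := ((n : ℝ) + 1)⁻¹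

lemma μseq_pos (n : ℕ) : 0 < μseq n := by
  have : (0 : ℝ) < (n : ℝ) + 1 := by positivity
  exact inv_pos.mpr this

lemma μseq_ne (n : ℕ) : ((μseq n : ℝ) : ℂ) ≠ 0 := by
  exact_mod_cast ne_of_gt (μseq_pos n)

lemma μseq_le {n N : ℕ} (h : N ≤ n) : μseq n ≤ μseq N := by
  apply inv_anti₀ (by positivity)
  have : (N : ℝ) ≤ (n : ℝ) := by exact_mod_cast h
  linarith

lemma tendsto_r (hΦcyc : Dense {y : H | ∃ x ∈ M, (x : H →L[ℂ] H) Φ = y}) (w : H) :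
    Tendsto (fun n => rCLM M Φ ξ (μseq n) w) atTop (𝓝 w) := by
  rw [Metric.tendsto_atTop]
  intro ε hε
  obtain ⟨y, hy, hdy⟩ := hΦcyc.exists_dist_lt w (show (0:ℝ) < ε/3 by linarith)
  obtain ⟨a, ha, rfl⟩ := hy
  obtain ⟨N, hN⟩ := exists_nat_gt (‖a ξ‖ * 3 / ε)
  refine ⟨N, fun n hn => ?_⟩
  set μ := μseq n with hμdef
  have hμ : 0 < μ := μseq_pos n
  -- generator estimate
  have e1 : ‖rCLM M Φ ξ μ (a Φ) - a Φ‖ ≤ μ * ‖a ξ‖ := by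
    have happ := approx M Φ ξ (gen_G M Φ ξ μ a ha)
    simp only [mk2_fst, mk2_snd] at happ
    have hfst : rCLM M Φ ξ μ (a Φ) - a Φ
        = -((mk2 (a Φ) ((μ:ℂ) • a ξ) - PP M Φ ξ μ (embed (a Φ))).fst) := by
      rw [rCLM_apply]
      simp only [WithLp.sub_fst, mk2_fst]
      abel
    rw [hfst, norm_neg]
    calc ‖(mk2 (a Φ) ((μ:ℂ) • a ξ) - PP M Φ ξ μ (embed (a Φ))).fst‖
        ≤ ‖mk2 (a Φ) ((μ:ℂ) • a ξ) - PP M Φ ξ μ (embed (a Φ))‖ := fst_le_norm _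
      _ ≤ ‖(μ:ℂ) • a ξ‖ := happ
      _ = μ * ‖a ξ‖ := by
          rw [norm_smul]
          simp [abs_of_pos hμ, Complex.norm_real]
  have e2 : ‖rCLM M Φ ξ μ w - rCLM M Φ ξ μ (a Φ)‖ ≤ ‖w - a Φ‖ := by
    rw [← map_sub]
    exact rCLM_le M Φ ξ μ _
  have hμsmall : μ * ‖a ξ‖ < ε / 3 := by
    have h1 : μ ≤ ((N : ℝ) + 1)⁻¹ := μseq_le hn
    have h2 : ‖a ξ‖ * 3 / ε < N := hN
    have h3 : (0:ℝ) < (N:ℝ) + 1 := by positivity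
    rw [div_lt_iff₀ hε] at h2
    have h4 : μ * ‖a ξ‖ ≤ ((N : ℝ) + 1)⁻¹ * ‖a ξ‖ :=
      mul_le_mul_of_nonneg_right h1 (norm_nonneg _)
    have h5 : ((N : ℝ) + 1)⁻¹ * ‖a ξ‖ < ε / 3 := by
      rw [inv_mul_lt_iff₀ h3]
      nlinarith [norm_nonneg (a ξ)]
    linarith
  have hdw : ‖w - a Φ‖ < ε / 3 := by
    rw [dist_eq_norm] at hdy
    exact hdy
  calc dist (rCLM M Φ ξ μ w) w
      = ‖rCLM M Φ ξ μ w - rCLM M Φ ξ μ (a Φ) + (rCLM M Φ ξ μ (a Φ) - a Φ) + (a Φ - w)‖ := by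
        rw [dist_eq_norm]; congr 1; abel
    _ ≤ ‖rCLM M Φ ξ μ w - rCLM M Φ ξ μ (a Φ)‖ + ‖rCLM M Φ ξ μ (a Φ) - a Φ‖ + ‖a Φ - w‖ :=
        norm_add₃_le
    _ ≤ ‖w - a Φ‖ + (μ * ‖a ξ‖) + ‖a Φ - w‖ := by
        have := norm_sub_rev (a Φ) w
        gcongr
    _ < ε/3 + ε/3 + ε/3 := by
        have := norm_sub_rev w (a Φ)
        have h6 : ‖a Φ - w‖ < ε / 3 := by rw [norm_sub_rev]; exact hdw
        gcongr
    _ = ε := by ring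

lemma tendsto_s (hΩcyc : Dense {y : H | ∃ x ∈ M, (x : H →L[ℂ] H) Ω = y})
    (hA : ∀ x : H →L[ℂ] H, x ∈ M → ⟪ξ, (star x) Ω⟫ = ⟪x Φ, η⟫) (γ : H) :
    Tendsto (fun n => ⟪sCLM M Φ ξ (μseq n) Φ, γ⟫) atTop (𝓝 ⟪ξ, γ⟫) := by
  rw [Metric.tendsto_atTop]
  intro ε hε
  have hξ1 : (0:ℝ) < ‖ξ‖ + 1 := by positivity
  obtain ⟨y, hy, hdy⟩ := hΩcyc.exists_dist_lt γ (show (0:ℝ) < ε/(2*(‖ξ‖+1)) by positivity)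
  obtain ⟨b, hb, rfl⟩ := hy
  obtain ⟨N, hN⟩ := exists_nat_gt (‖ξ‖ * ‖b η‖ * 2 / ε)
  refine ⟨N, fun n hn => ?_⟩
  set μ := μseq n with hμdef
  have hμ : 0 < μ := μseq_pos n
  have hμC : ((μ:ℝ):ℂ) ≠ 0 := μseq_ne n
  -- the Gspace generator with a = 1
  have hq : mk2 Φ ((μ:ℂ) • ξ) ∈ Gspace M Φ ξ μ := by
    have h := gen_G M Φ ξ μ 1 (one_mem M)
    simpa using h
  have happ := approx M Φ ξ hq
  simp only [mk2_fst, mk2_snd] at happ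
  have hμξ : ‖(μ:ℂ) • ξ‖ = μ * ‖ξ‖ := by
    rw [norm_smul]; simp [abs_of_pos hμ, Complex.norm_real]
  rw [hμξ] at happ
  set d : F2 H := mk2 Φ ((μ:ℂ) • ξ) - PP M Φ ξ μ (embed Φ) with hd
  have hdG : d ∈ Gspace M Φ ξ μ := Submodule.sub_mem _ hq (PP_mem M Φ ξ μ _)
  have hdsnd : d.snd = (μ:ℂ) • (ξ - sCLM M Φ ξ μ Φ) := by
    rw [sCLM_apply, smul_sub, smul_inv_smul₀ hμC, hd]
    simp only [WithLp.sub_snd, mk2_snd]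
  -- key identity against C elements
  have hkey : ∀ p ∈ Cspace M Φ ξ, ⟪ξ - sCLM M Φ ξ μ Φ, p.fst⟫ = ⟪d.fst, p.snd⟫ := by
    intro p hp
    have h := hdG p hp
    rw [hdsnd, inner_smul_left, Complex.conj_ofReal] at h
    exact (mul_left_cancel₀ hμC h).symm
  have hbnd : ‖ξ - sCLM M Φ ξ μ Φ‖ ≤ ‖ξ‖ := by
    have h1 : ‖d.snd‖ ≤ μ * ‖ξ‖ := le_trans (snd_le_norm d) happ
    rw [hdsnd, norm_smul] at h1
    simp only [Complex.norm_real, Real.norm_eq_abs, abs_of_pos hμ] at h1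
    exact le_of_mul_le_mul_left (by linarith) hμ
  have hest : ‖⟪ξ - sCLM M Φ ξ μ Φ, b Ω⟫‖ ≤ μ * ‖ξ‖ * ‖b η‖ := by
    have hpC := gen_C M Φ Ω ξ η hA b hb
    have h := hkey _ hpC
    simp only [mk2_fst, mk2_snd] at h
    rw [h]
    calc ‖⟪d.fst, b η⟫‖ ≤ ‖d.fst‖ * ‖b η‖ := norm_inner_le_norm _ _
      _ ≤ ‖d‖ * ‖b η‖ := mul_le_mul_of_nonneg_right (fst_le_norm d) (norm_nonneg _)
      _ ≤ μ * ‖ξ‖ * ‖b η‖ := mul_le_mul_of_nonneg_right happ (norm_nonneg _)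
  -- conclude
  have hsplit : ⟪ξ, γ⟫ - ⟪sCLM M Φ ξ μ Φ, γ⟫ = ⟪ξ - sCLM M Φ ξ μ Φ, γ⟫ := by
    rw [inner_sub_left]
  have hdist : dist ⟪sCLM M Φ ξ μ Φ, γ⟫ ⟪ξ, γ⟫ = ‖⟪ξ - sCLM M Φ ξ μ Φ, γ⟫‖ := by
    rw [dist_eq_norm, ← hsplit, norm_sub_rev]
  rw [hdist]
  have htri : ‖⟪ξ - sCLM M Φ ξ μ Φ, γ⟫‖
      ≤ ‖⟪ξ - sCLM M Φ ξ μ Φ, b Ω⟫‖ + ‖ξ - sCLM M Φ ξ μ Φ‖ * ‖γ - b Ω‖ := by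
    have h1 : ⟪ξ - sCLM M Φ ξ μ Φ, γ⟫
        = ⟪ξ - sCLM M Φ ξ μ Φ, b Ω⟫ + ⟪ξ - sCLM M Φ ξ μ Φ, γ - b Ω⟫ := by
      rw [← inner_add_right]; congr 1; abel
    rw [h1]
    calc ‖⟪ξ - sCLM M Φ ξ μ Φ, b Ω⟫ + ⟪ξ - sCLM M Φ ξ μ Φ, γ - b Ω⟫‖
        ≤ ‖⟪ξ - sCLM M Φ ξ μ Φ, b Ω⟫‖ + ‖⟪ξ - sCLM M Φ ξ μ Φ, γ - b Ω⟫‖ := norm_add_le _ _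
      _ ≤ ‖⟪ξ - sCLM M Φ ξ μ Φ, b Ω⟫‖ + ‖ξ - sCLM M Φ ξ μ Φ‖ * ‖γ - b Ω‖ := by
          gcongr
          exact norm_inner_le_norm _ _
  have h2 : ‖ξ - sCLM M Φ ξ μ Φ‖ * ‖γ - b Ω‖ < ε / 2 := by
    rw [dist_eq_norm] at hdy
    calc ‖ξ - sCLM M Φ ξ μ Φ‖ * ‖γ - b Ω‖ ≤ ‖ξ‖ * ‖γ - b Ω‖ :=
          mul_le_mul_of_nonneg_right hbnd (norm_nonneg _)
      _ < (‖ξ‖ + 1) * (ε/(2*(‖ξ‖+1))) := by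
          apply mul_lt_mul' (by linarith) hdy (norm_nonneg _) hξ1
      _ = ε / 2 := by field_simp
  have h3 : μ * ‖ξ‖ * ‖b η‖ < ε / 2 := by
    have h1' : μ ≤ ((N : ℝ) + 1)⁻¹ := μseq_le hn
    rw [div_lt_iff₀ hε] at hN
    have h3' : (0:ℝ) < (N:ℝ) + 1 := by positivity
    have h4 : μ * ‖ξ‖ * ‖b η‖ ≤ ((N : ℝ) + 1)⁻¹ * (‖ξ‖ * ‖b η‖) := by
      rw [mul_assoc]
      exact mul_le_mul_of_nonneg_right h1' (by positivity)
    have h5 : ((N : ℝ) + 1)⁻¹ * (‖ξ‖ * ‖b η‖) < ε / 2 := by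
      rw [inv_mul_lt_iff₀ h3']
      nlinarith [norm_nonneg ξ, norm_nonneg (b η), mul_nonneg (norm_nonneg ξ) (norm_nonneg (b η))]
    linarith
  calc ‖⟪ξ - sCLM M Φ ξ μ Φ, γ⟫‖
      ≤ ‖⟪ξ - sCLM M Φ ξ μ Φ, b Ω⟫‖ + ‖ξ - sCLM M Φ ξ μ Φ‖ * ‖γ - b Ω‖ := htri
    _ < ε/2 + ε/2 := by
        have := lt_of_le_of_lt hest h3
        linarith
    _ = ε := by ring

/-! ### The key duality lemma -/

lemma key (hΦcyc : Dense {y : H | ∃ x ∈ M, (x : H →L[ℂ] H) Φ = y})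
    (hΩcyc : Dense {y : H | ∃ x ∈ M, (x : H →L[ℂ] H) Ω = y})
    (β γ : H)
    (hA : ∀ x : H →L[ℂ] H, x ∈ M → ⟪ξ, (star x) Ω⟫ = ⟪x Φ, η⟫)
    (hB : ∀ x' : H →L[ℂ] H, x' ∈ M.commutant → ⟪β, (star x') Ω⟫ = ⟪x' Φ, γ⟫) :
    ⟪β, η⟫ = ⟪ξ, γ⟫ := by
  have h1 := tendsto_s M Φ Ω ξ η hΩcyc hA γ
  have h2 : ∀ n, ⟪sCLM M Φ ξ (μseq n) Φ, γ⟫ = ⟪rCLM M Φ ξ (μseq n) β, η⟫ := by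
    intro n
    set μ := μseq n with hμdef
    have hμC : ((μ:ℝ):ℂ) ≠ 0 := μseq_ne n
    have hBs := hB _ (sCLM_mem_commutant M Φ ξ μ)
    have e2 : ⟪β, (star (sCLM M Φ ξ μ)) Ω⟫ = ⟪sCLM M Φ ξ μ β, Ω⟫ := by
      rw [star_eq_adjoint]
      exact adjoint_inner_right _ β Ω
    have e1 : ⟪sCLM M Φ ξ μ β, Ω⟫ = ⟪rCLM M Φ ξ μ β, η⟫ := by
      have hC1 : mk2 Ω η ∈ Cspace M Φ ξ := by
        have := gen_C M Φ Ω ξ η hA 1 (one_mem M)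
        simpa using this
      have h := PP_mem M Φ ξ μ (embed β) _ hC1
      simp only [mk2_fst, mk2_snd] at h
      rw [sCLM_apply, rCLM_apply, inner_smul_left, ← h]
      rw [Complex.conj_inv, Complex.conj_ofReal]
      rw [← mul_assoc, inv_mul_cancel₀ hμC, one_mul]
    rw [← hBs, e2, e1]
  have h3 : Tendsto (fun n => ⟪rCLM M Φ ξ (μseq n) β, η⟫) atTop (𝓝 ⟪β, η⟫) :=
    Filter.Tendsto.inner (tendsto_r M Φ ξ hΦcyc β) tendsto_const_nhds
  exact (tendsto_nhds_unique (h1.congr h2) h3).symm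


/-! ### Real subspace of commutant graph pairs -/

lemma smul_mem_commutant (c : ℂ) {x : H →L[ℂ] H} (hx : x ∈ M.commutant) :
    c • x ∈ M.commutant := by
  rw [VonNeumannAlgebra.mem_commutant_iff] at hx ⊢
  intro g hg
  rw [mul_smul_comm, smul_mul_assoc, hx g hg]

def KR : Submodule ℝ (F2 H) where
  carrier := {f : F2 H | ∃ x' ∈ M.commutant,
    (x' : H →L[ℂ] H) Φ = f.fst ∧ (star x' : H →L[ℂ] H) Ω = f.snd}
  add_mem' := by
    rintro f g ⟨x, hx, hx1, hx2⟩ ⟨y, hy, hy1, hy2⟩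
    refine ⟨x + y, add_mem hx hy, ?_, ?_⟩
    · simp [WithLp.add_fst, hx1, hy1]
    · simp [WithLp.add_snd, star_add, hx2, hy2]
  zero_mem' := ⟨0, zero_mem _, by simp, by simp⟩
  smul_mem' := by
    rintro c f ⟨x, hx, hx1, hx2⟩
    refine ⟨(c : ℂ) • x, smul_mem_commutant M _ hx, ?_, ?_⟩
    · rw [ContinuousLinearMap.smul_apply, hx1, WithLp.smul_fst, Complex.coe_smul]
    · rw [star_smul, Complex.star_def, Complex.conj_ofReal,
        ContinuousLinearMap.smul_apply, hx2, WithLp.smul_snd, Complex.coe_smul]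

end Bek7

/-- Let `M` be a von Neumann algebra on `H` with cyclic and separating vectors
`Ω, Φ` (cyclicity for `M` and for `M'` is assumed; the latter is equivalent to separation).
Let `S = S_{Ω,Φ}` be the closure of `xΦ ↦ x*Ω` (`x ∈ M`) and `S' = S'_{Ω,Φ}` the closure of
`x'Φ ↦ x'*Ω` (`x' ∈ M'`), encoded by the requirement that their graphs are the closures of the
corresponding sets of pairs.  Then the adjoint of `S_{Ω,Φ}` equals `S'_{Ω,Φ}`. -/
theorem bekenstein_stmt7 {H : Type*} [NormedAddCommGroup H] [InnerProductSpace ℂ H]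
    [CompleteSpace H] (M : VonNeumannAlgebra H) (Ω Φ : H)
    (hΦcyc : Dense {y : H | ∃ x ∈ M, (x : H →L[ℂ] H) Φ = y})
    (hΦcyc' : Dense {y : H | ∃ x ∈ M.commutant, (x : H →L[ℂ] H) Φ = y})
    (hΩcyc : Dense {y : H | ∃ x ∈ M, (x : H →L[ℂ] H) Ω = y})
    (hΩcyc' : Dense {y : H | ∃ x ∈ M.commutant, (x : H →L[ℂ] H) Ω = y})
    (S S' : ConjLinearPMap H)
    (hS : S.graph =
      closure {p : H × H | ∃ x ∈ M, (x : H →L[ℂ] H) Φ = p.1 ∧ (star x : H →L[ℂ] H) Ω = p.2})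
    (hS' : S'.graph =
      closure {p : H × H | ∃ x ∈ M.commutant,
        (x : H →L[ℂ] H) Φ = p.1 ∧ (star x : H →L[ℂ] H) Ω = p.2}) :
    S'.IsAdjointOf S := by
  open Bek7 ContinuousLinearMap in
  set A : Set (H × H) :=
    {p : H × H | ∃ x ∈ M, (x : H →L[ℂ] H) Φ = p.1 ∧ (star x : H →L[ℂ] H) Ω = p.2} with hAdef
  set A' : Set (H × H) :=
    {p : H × H | ∃ x ∈ M.commutant,
      (x : H →L[ℂ] H) Φ = p.1 ∧ (star x : H →L[ℂ] H) Ω = p.2} with hA'def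
  -- the generator identity
  have hgen : ∀ p ∈ A, ∀ q ∈ A', ⟪q.1, p.2⟫ = ⟪p.1, q.2⟫ := by
    rintro p ⟨x, hx, hx1, hx2⟩ q ⟨x', hx', hx1', hx2'⟩
    rw [← hx1, ← hx2, ← hx1', ← hx2', star_eq_adjoint, star_eq_adjoint]
    calc ⟪x' Φ, adjoint x Ω⟫ = ⟪x (x' Φ), Ω⟫ := adjoint_inner_right x (x' Φ) Ω
      _ = ⟪x' (x Φ), Ω⟫ := by
          have hc : x * x' = x' * x := (VonNeumannAlgebra.mem_commutant_iff.mp hx') x hx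
          have hxx : x (x' Φ) = x' (x Φ) := by
            have := congrArg (fun T : H →L[ℂ] H => T Φ) hc
            simpa [ContinuousLinearMap.mul_apply] using this
          rw [hxx]
      _ = ⟪x Φ, adjoint x' Ω⟫ := (adjoint_inner_right x' (x Φ) Ω).symm
  -- extend to closures
  have hcl : ∀ p ∈ closure A, ∀ q ∈ closure A', ⟪q.1, p.2⟫ = ⟪p.1, q.2⟫ := by
    have hstep1 : ∀ q ∈ A', ∀ p ∈ closure A, ⟪q.1, p.2⟫ = ⟪p.1, q.2⟫ := by
      intro q hq
      have hsub : closure A ⊆ {p : H × H | ⟪q.1, p.2⟫ = ⟪p.1, q.2⟫} := by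
        apply closure_minimal
        · intro p hp
          exact hgen p hp q hq
        · exact isClosed_eq (Continuous.inner continuous_const continuous_snd)
            (Continuous.inner continuous_fst continuous_const)
      exact fun p hp => hsub hp
    intro p hp q hq
    have hsub : closure A' ⊆ {q : H × H | ⟪q.1, p.2⟫ = ⟪p.1, q.2⟫} := by
      apply closure_minimal
      · intro q' hq'
        exact hstep1 q' hq' p hp
      · exact isClosed_eq (Continuous.inner continuous_fst continuous_const)
          (Continuous.inner continuous_const continuous_snd)
    exact hsub hq
  -- the second part of `IsAdjointOf`
  have hpart2 : ∀ ξ' ∈ S'.domain, ∀ ζ ∈ S.domain, ⟪ξ', S.toFun ζ⟫ = ⟪ζ, S'.toFun ξ'⟫ := by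
    intro ξ' hξ' ζ hζ
    have hp : ((ζ, S.toFun ζ) : H × H) ∈ closure A := by
      rw [← hS]
      exact ⟨hζ, rfl⟩
    have hq : ((ξ', S'.toFun ξ') : H × H) ∈ closure A' := by
      rw [← hS']
      exact ⟨hξ', rfl⟩
    exact hcl _ hp _ hq
  refine ⟨fun ξ' => ⟨fun hdom => ⟨S'.toFun ξ', fun ζ hζ => hpart2 ξ' hdom ζ hζ⟩, ?_⟩, hpart2⟩
  rintro ⟨η, hη⟩
  -- the adjoint relation on generators
  have hAc : ∀ x : H →L[ℂ] H, x ∈ M → ⟪ξ', (star x) Ω⟫ = ⟪x Φ, η⟫ := by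
    intro x hx
    have hxg : ((x Φ, (star x : H →L[ℂ] H) Ω) : H × H) ∈ S.graph := by
      rw [hS]
      exact subset_closure ⟨x, hx, rfl, rfl⟩
    obtain ⟨hdom, heq⟩ := hxg
    have h := hη (x Φ) hdom
    have heq' : (star x : H →L[ℂ] H) Ω = S.toFun (x Φ) := heq
    rw [heq']
    exact h
  -- it suffices to show `(ξ', η) ∈ closure A'`
  suffices hmem : ((ξ', η) : H × H) ∈ closure A' by
    have : ((ξ', η) : H × H) ∈ S'.graph := by rw [hS']; exact hmem
    exact this.1
  -- pass to the real Hilbert space structure on pairs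
  letI : InnerProductSpace ℝ (F2 H) := InnerProductSpace.rclikeToReal ℂ (F2 H)
  have hmemF : (mk2 ξ' η : F2 H) ∈ ((KR M Φ Ω)ᗮᗮ : Submodule ℝ (F2 H)) := by
    rw [Submodule.mem_orthogonal]
    intro u hu
    rw [Submodule.mem_orthogonal] at hu
    -- extract the complex-linear orthogonality relation
    have hucond : ∀ x' : H →L[ℂ] H, x' ∈ M.commutant →
        ⟪u.snd, (star x') Ω⟫ = ⟪x' Φ, -u.fst⟫ := by
      intro x' hx'
      have hw1 : (mk2 ((x' : H →L[ℂ] H) Φ) ((star x' : H →L[ℂ] H) Ω) : F2 H) ∈ KR M Φ Ω :=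
        ⟨x', hx', rfl, rfl⟩
      have hw2 : (mk2 ((Complex.I • x' : H →L[ℂ] H) Φ)
          ((star (Complex.I • x') : H →L[ℂ] H) Ω) : F2 H) ∈ KR M Φ Ω :=
        ⟨Complex.I • x', smul_mem_commutant M _ hx', rfl, rfl⟩
      have h1 := hu _ hw1
      have h2 := hu _ hw2
      rw [real_inner_eq_re_inner ℂ, inner_F2] at h1 h2
      simp only [mk2_fst, mk2_snd] at h1 h2
      set za : ℂ := ⟪(x' : H →L[ℂ] H) Φ, u.fst⟫ with hza
      set zb : ℂ := ⟪(star x' : H →L[ℂ] H) Ω, u.snd⟫ with hzb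
      have h2' : ((Complex.I • x' : H →L[ℂ] H) Φ) = Complex.I • ((x' : H →L[ℂ] H) Φ) := rfl
      have h2'' : ((star (Complex.I • x') : H →L[ℂ] H) Ω)
          = (-Complex.I) • ((star x' : H →L[ℂ] H) Ω) := by
        rw [star_smul, Complex.star_def, Complex.conj_I]
        rfl
      rw [h2', h2''] at h2
      simp only [inner_smul_left, map_neg, Complex.conj_I, neg_mul, neg_neg, ← hza, ← hzb] at h2
      -- h1 : (za + zb).re = 0 ; h2 : (-(I*za) + I*zb).re = 0
      have hre : za.re + zb.re = 0 := by
        simpa [RCLike.re_to_complex, Complex.add_re] using h1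
      have him : za.im - zb.im = 0 := by
        simp only [RCLike.re_to_complex, Complex.add_re, Complex.neg_re, Complex.mul_re,
          Complex.I_re, Complex.I_im] at h2
        linarith
      -- conclude : conj zb = -za
      have hgoal : (starRingEnd ℂ) zb = -za := by
        apply Complex.ext
        · simp only [Complex.conj_re, Complex.neg_re]
          linarith
        · simp only [Complex.conj_im, Complex.neg_im]
          linarith
      calc ⟪u.snd, (star x') Ω⟫ = (starRingEnd ℂ) zb := (inner_conj_symm _ _).symm
        _ = -za := hgoal
        _ = -((starRingEnd ℂ) ⟪u.fst, (x' : H →L[ℂ] H) Φ⟫) := by rw [hza, inner_conj_symm]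
        _ = ⟪x' Φ, -u.fst⟫ := by rw [inner_neg_right, inner_conj_symm]
    -- apply the key duality lemma
    have hkey := key M Φ Ω ξ' η hΦcyc hΩcyc u.snd (-u.fst) hAc hucond
    -- conclude the real orthogonality
    rw [real_inner_eq_re_inner ℂ, inner_F2]
    simp only [mk2_fst, mk2_snd]
    rw [hkey, inner_neg_right]
    have hc : (⟪ξ', u.fst⟫ : ℂ) = (starRingEnd ℂ) (⟪u.fst, ξ'⟫ : ℂ) :=
      (inner_conj_symm _ _).symm
    show ((⟪u.fst, ξ'⟫ : ℂ) + -(⟪ξ', u.fst⟫ : ℂ)).re = 0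
    have hre2 : ((⟪ξ', u.fst⟫ : ℂ)).re = ((⟪u.fst, ξ'⟫ : ℂ)).re := by
      rw [hc]
      exact Complex.conj_re _
    simp only [Complex.add_re, Complex.neg_re, hre2]
    ring
  rw [Submodule.orthogonal_orthogonal_eq_closure] at hmemF
  have hmemcl : (mk2 ξ' η : F2 H) ∈ closure ((KR M Φ Ω : Submodule ℝ (F2 H)) : Set (F2 H)) := by
    rwa [← Submodule.topologicalClosure_coe]
  -- transfer along the homeomorphism `F2 H ≃ H × H`
  have hKRA : ((KR M Φ Ω : Submodule ℝ (F2 H)) : Set (F2 H))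
      = (WithLp.prodContinuousLinearEquiv 2 ℂ H H).toHomeomorph ⁻¹' A' := rfl
  rw [hKRA, ← Homeomorph.preimage_closure] at hmemcl
  exact hmemcl
end
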